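/- arXiv:2008.03027 — 3 statements merged into one kernel-verified Lean document; each statement's English description precedes it below -/
import Mathlib

section
/- Let r be a natural number and let G be a finite simple graph such that for every vertex v the punctured ball at v (for parameter r) is connected. Then the subspace S_r is locally connected; that is, for every vertex v of G and every nonempty proper subset X of the set of edges of G incident with v, there exists a cycle of G of length at most r whose edge set meets X in an odd number of edges (so the characteristic vector of X is not orthogonal to every element of S_r). -/
/-! If some nonempty proper `X ⊆ δ(v)` met every cycle of length `≤ r` evenly, it would meet every
closed walk of length `≤ r` evenly, since such a walk splits into cycles and backtracks of no greater
length. Then the parity of `|X ∩ Q|` over walks `Q` from `v` of length `≤ r/2` depends only on the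
endpoint, and it does not change along an edge of the punctured ball: that edge avoids `X`, and with
shortest walks to its ends it closes a walk of length `≤ r` (the excluded edges between two vertices
at distance exactly `r/2` are what makes this work for even `r`). As the punctured ball is connected
and contains all neighbours of `v`, a neighbour across an edge of `X` and one across an edge outside
`X` would get different parities. -/

open SimpleGraph

/-- The ball of radius `r/2` around `v`: vertices at distance at most `⌊r/2⌋` from `v`,
with all edges of `G` between such vertices except, when `r` is even, edges joining two
vertices both at distance exactly `r/2` from `v`. -/
def ballSubgraph {V : Type*} (G : SimpleGraph V) (r : ℕ) (v : V) : G.Subgraph where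
  verts := {w | G.Reachable v w ∧ G.dist v w ≤ r / 2}
  Adj x y := G.Adj x y ∧ (G.Reachable v x ∧ G.dist v x ≤ r / 2) ∧
      (G.Reachable v y ∧ G.dist v y ≤ r / 2) ∧
      ¬(Even r ∧ 2 * G.dist v x = r ∧ 2 * G.dist v y = r)
  adj_sub h := h.1
  edge_vert h := h.2.1
  symm := by
    refine ⟨fun x y h => ?_⟩
    exact ⟨h.1.symm, h.2.2.1, h.2.1, by tauto⟩

/-- The punctured ball at `v` for parameter `r`: the ball `B_{r/2}(v)` with `v` deleted. -/
def puncturedBall {V : Type*} (G : SimpleGraph V) (r : ℕ) (v : V) : G.Subgraph :=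
  (ballSubgraph G r v).deleteVerts {v}

theorem List.card_inter_toFinset_of_nodup {α : Type*} [DecidableEq α] (X : Finset α)
    {l : List α} (hl : l.Nodup) : (X ∩ l.toFinset).card = l.countP (· ∈ X) := by
  rw [Finset.inter_comm, ← Finset.filter_mem_eq_inter, List.countP_eq_length_filter,
    ← List.toFinset_card_of_nodup (hl.filter _)]
  congr 1
  ext
  simp

namespace SimpleGraph.Walk

variable {V : Type*} [DecidableEq V] {G : SimpleGraph V} (X : Finset (Sym2 V))

lemma even_countP_edges_cons_of_not_isCycle {u w : V} (h : G.Adj u w) {a : G.Walk w u}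
    (ha : a.IsPath) (hc : ¬(cons h a).IsCycle) : Even ((cons h a).edges.countP (· ∈ X)) := by
  have hmem : s(w, u) ∈ a.edges := by
    by_contra hn
    exact hc ((cons_isCycle_iff a h).2 ⟨ha, by rwa [Sym2.eq_swap]⟩)
  rw [ha.eq_adj_toWalk_of_mem_edges hmem]
  by_cases hX : s(u, w) ∈ X <;> simp [Sym2.eq_swap, hX]

theorem exists_isPath_countP_or_isCycle_odd {u v : V} (p : G.Walk u v) :
    (∃ q : G.Walk u v, q.IsPath ∧ q.length ≤ p.length ∧
        (Even (q.edges.countP (· ∈ X)) ↔ Even (p.edges.countP (· ∈ X)))) ∨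
      ∃ (w : V) (c : G.Walk w w), c.IsCycle ∧ c.length ≤ p.length ∧
        Odd (X ∩ c.edges.toFinset).card := by
  induction p with
  | nil => exact Or.inl ⟨nil, .nil, le_rfl, Iff.rfl⟩
  | @cons u w v h p ih =>
    obtain ⟨q, hq, hql, hqX⟩ | ⟨x, c, hc, hcl, hcX⟩ := ih
    swap
    · exact Or.inr ⟨x, c, hc, by rw [length_cons]; omega, hcX⟩
    by_cases hu : u ∈ q.support
    swap
    · refine Or.inl ⟨cons h q, hq.cons hu, by simpa using hql, ?_⟩
      simp only [edges_cons, List.countP_cons, Nat.even_add, hqX]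
    set a := q.takeUntil u hu
    set b := q.dropUntil u hu
    have hlen : a.length + b.length = q.length := by
      rw [← length_append, q.take_spec hu]
    by_cases hodd : (cons h a).IsCycle ∧ Odd (X ∩ (cons h a).edges.toFinset).card
    · exact Or.inr ⟨u, cons h a, hodd.1, by simp only [length_cons]; omega, hodd.2⟩
    have heven : Even ((cons h a).edges.countP (· ∈ X)) := by
      by_cases hc : (cons h a).IsCycle
      · rw [← List.card_inter_toFinset_of_nodup X hc.edges_nodup, ← Nat.not_odd_iff_even]
        exact fun ho => hodd ⟨hc, ho⟩
      · exact even_countP_edges_cons_of_not_isCycle X h (hq.takeUntil hu) hc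
    refine Or.inl ⟨b, hq.dropUntil hu, by rw [length_cons]; omega, ?_⟩
    have hsplit : q.edges.countP (· ∈ X) = a.edges.countP (· ∈ X) + b.edges.countP (· ∈ X) := by
      rw [← List.countP_append, ← edges_append, q.take_spec hu]
    rw [edges_cons, List.countP_cons] at heven ⊢
    simp only [Nat.even_add, ← hqX, hsplit] at heven ⊢
    tauto

end SimpleGraph.Walk

namespace SimpleGraph

variable {V : Type*} [DecidableEq V] {G : SimpleGraph V} {r : ℕ} {X : Finset (Sym2 V)}

/-- Orthogonality of `X` to `S_r`, tested on the cycles spanning it. -/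
def IsOrthogonalToShortCycles (G : SimpleGraph V) (r : ℕ) (X : Finset (Sym2 V)) : Prop :=
  ∀ (w : V) (c : G.Walk w w), c.IsCycle → c.length ≤ r → Even (X ∩ c.edges.toFinset).card

namespace IsOrthogonalToShortCycles

theorem even_countP_of_length_le (hX : G.IsOrthogonalToShortCycles r X) {u : V}
    (p : G.Walk u u) (hp : p.length ≤ r) : Even (p.edges.countP (· ∈ X)) := by
  obtain ⟨q, hq, -, hqp⟩ | ⟨w, c, hc, hcl, hcX⟩ := p.exists_isPath_countP_or_isCycle_odd X
  · rw [← hqp, Walk.edges_eq_nil.mpr (Walk.isPath_iff_nil.mp hq)]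
    simp
  · exact absurd (hX w c hc (hcl.trans hp)) (Nat.not_even_iff_odd.mpr hcX)

theorem even_countP_iff {u w : V} (hX : G.IsOrthogonalToShortCycles r X) (p q : G.Walk u w)
    (h : p.length + q.length ≤ r) :
    Even (p.edges.countP (· ∈ X)) ↔ Even (q.edges.countP (· ∈ X)) := by
  have := hX.even_countP_of_length_le (p.append q.reverse) (by simpa using h)
  rwa [Walk.edges_append, List.countP_append, Walk.edges_reverse, List.countP_reverse,
    Nat.even_add] at this

end IsOrthogonalToShortCycles

omit [DecidableEq V] in
theorem dist_add_dist_lt_of_ballSubgraph_adj {v w z : V} (h : (ballSubgraph G r v).Adj w z) :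
    G.dist v w + G.dist v z < r := by
  obtain ⟨-, ⟨-, hw⟩, ⟨-, hz⟩, hr⟩ := h
  rcases Nat.even_or_odd r with he | ho
  · have h2 := Nat.even_iff.mp he
    have hne : ¬(2 * G.dist v w = r ∧ 2 * G.dist v z = r) := fun h => hr ⟨he, h⟩
    omega
  · have := Nat.odd_iff.mp ho
    omega

omit [DecidableEq V] in
theorem two_le_of_puncturedBall_verts_nonempty {v : V}
    (hv : (puncturedBall G r v).verts.Nonempty) : 2 ≤ r := by
  obtain ⟨w, ⟨hvw, hw⟩, hwv⟩ := hv
  have := hvw.pos_dist_of_ne (Ne.symm hwv)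
  omega

omit [DecidableEq V] in
theorem mem_puncturedBall_verts_of_adj {v z : V} (hr : 2 ≤ r) (hz : G.Adj v z) :
    z ∈ (puncturedBall G r v).verts := by
  refine ⟨⟨hz.reachable, ?_⟩, hz.ne'⟩
  have := dist_le hz.toWalk
  simp only [Walk.length_cons, Walk.length_nil] at this
  omega

omit [DecidableEq V] in
theorem exists_adj_of_mem_incidenceSet {v : V} {e : Sym2 V} (he : e ∈ G.incidenceSet v) :
    ∃ x, G.Adj v x ∧ s(v, x) = e := by
  obtain ⟨x, rfl⟩ := Sym2.mem_iff_exists.mp he.2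
  exact ⟨x, (G.mem_incidenceSet v x).mp he, rfl⟩

omit [DecidableEq V] in
theorem Subgraph.Connected.induction_on_adj {H : G.Subgraph} (hH : H.Connected) {P : V → Prop}
    (hP : ∀ a b, H.Adj a b → P a → P b) {a b : V} (ha : a ∈ H.verts) (hb : b ∈ H.verts)
    (hPa : P a) : P b := by
  suffices ∀ {c d : H.verts}, H.coe.Walk c d → P c → P d from
    (hH ⟨a, ha⟩ ⟨b, hb⟩).elim (this · hPa)
  intro c d p
  induction p with
  | nil => exact id
  | cons hq _ ih => exact fun hPc => ih (hP _ _ hq hPc)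

theorem IsOrthogonalToShortCycles.exists_odd_of_puncturedBall_adj
    (hX : G.IsOrthogonalToShortCycles r X) {v w z : V} (hXv : ↑X ⊆ G.incidenceSet v)
    (hwz : (puncturedBall G r v).Adj w z)
    (hw : ∃ Q : G.Walk v w, Q.length ≤ r / 2 ∧ Odd (Q.edges.countP (· ∈ X))) :
    ∃ Q : G.Walk v z, Q.length ≤ r / 2 ∧ Odd (Q.edges.countP (· ∈ X)) := by
  obtain ⟨-, hwv, -, hzv, hball⟩ := Subgraph.deleteVerts_adj.mp hwz
  have hlt := dist_add_dist_lt_of_ballSubgraph_adj hball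
  obtain ⟨hwz, ⟨hvw, hdw⟩, ⟨hvz, hdz⟩, -⟩ := hball
  obtain ⟨Q, hQ, hQX⟩ := hw
  obtain ⟨Qw, hQw⟩ := hvw.exists_walk_length_eq_dist
  obtain ⟨Qz, hQz⟩ := hvz.exists_walk_length_eq_dist
  have hnX : s(w, z) ∉ X := fun he => by
    rcases Sym2.mem_iff.mp (hXv he).2 with rfl | rfl <;> simp_all
  have hQQw := hX.even_countP_iff Q Qw (by omega)
  have hQwQz := hX.even_countP_iff (Qw.concat hwz) Qz (by simp; omega)
  refine ⟨Qz, by omega, ?_⟩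
  simp only [Walk.edges_concat, List.concat_eq_append, List.countP_append,
    List.countP_singleton, hnX, decide_false, Bool.false_eq_true, if_false, add_zero] at hQwQz
  rw [← Nat.not_even_iff_odd] at hQX ⊢
  rwa [← hQwQz, ← hQQw]

end SimpleGraph

theorem locally_connected_of_no_local_cutvertex_general
    {V : Type*} [DecidableEq V] (r : ℕ) (G : SimpleGraph V)
    (hloc : ∀ v : V, (puncturedBall G r v).Connected) :
    ∀ (v : V) (X : Finset (Sym2 V)), ↑X ⊆ G.incidenceSet v → X.Nonempty →
      ↑X ≠ G.incidenceSet v →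
      ∃ (u : V) (c : G.Walk u u), c.IsCycle ∧ c.length ≤ r ∧
        Odd (X ∩ c.edges.toFinset).card := by
  intro v X hXv ⟨e, heX⟩ hXne
  by_contra hodd
  have hX : G.IsOrthogonalToShortCycles r X := fun w c hc hcr =>
    Nat.not_odd_iff_even.mp fun ho => hodd ⟨w, c, hc, hcr, ho⟩
  obtain ⟨x, hx, rfl⟩ := exists_adj_of_mem_incidenceSet (hXv heX)
  obtain ⟨f, hf, hfX : f ∉ X⟩ := Set.exists_of_ssubset (hXv.ssubset_of_ne hXne)
  obtain ⟨y, hy, rfl⟩ := exists_adj_of_mem_incidenceSet hf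
  have hr := two_le_of_puncturedBall_verts_nonempty (hloc v).nonempty
  obtain ⟨Q, hQ, hQX⟩ :=
    (hloc v).induction_on_adj (fun _ _ => hX.exists_odd_of_puncturedBall_adj hXv)
      (mem_puncturedBall_verts_of_adj hr hx) (mem_puncturedBall_verts_of_adj hr hy)
      ⟨hx.toWalk, by simp; omega, by simp [heX]⟩
  have hQy := hX.even_countP_iff Q hy.toWalk (by simp; omega)
  exact Nat.not_even_iff_odd.mpr hQX (hQy.mpr (by simp [hfX]))

theorem locally_connected_of_no_local_cutvertex
    {V : Type*} [Fintype V] [DecidableEq V] (r : ℕ) (G : SimpleGraph V)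
    (hloc : ∀ v : V, (puncturedBall G r v).Connected) :
    ∀ (v : V) (X : Finset (Sym2 V)), ↑X ⊆ G.incidenceSet v → X.Nonempty →
      ↑X ≠ G.incidenceSet v →
      ∃ (u : V) (c : G.Walk u u), c.IsCycle ∧ c.length ≤ r ∧
        Odd (X ∩ c.edges.toFinset).card :=
  locally_connected_of_no_local_cutvertex_general r G hloc
end

section
/- Let r be a natural number and let G be a finite simple graph. Then the characteristic vector of the edge set of every cycle of G of length at most r lies in the F_2-linear span of the characteristic vectors of the edge sets of the following cycles: (a) cycles of the form P ∪ P′, where P and P′ are two internally disjoint shortest paths in G between the same pair of distinct vertices u and w with 2·dist_G(u,w) ≤ r; and (b) cycles consisting of an edge e of G with endpoints x and y together with two internally disjoint shortest paths in G from a common vertex v to x and from v to y, where both paths have length d satisfying 2d + 1 ≤ r. -/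
open SimpleGraph

/-- The characteristic vector (over `F₂`) of the edge set of a walk. -/
def walkChar {V : Type*} [DecidableEq V] {G : SimpleGraph V} {u : V} (c : G.Walk u u) :
    Sym2 V → ZMod 2 :=
  fun e => if e ∈ c.edges then 1 else 0

/-- Cycles of type (a): the edge set of the cycle is `P ∪ P'` for two internally disjoint
shortest paths `P`, `P'` between the same pair of distinct vertices `a`, `b`
with `2 · dist(a,b) ≤ r`. -/
def IsTypeACycle {V : Type*} [DecidableEq V] (G : SimpleGraph V) (r : ℕ) {w : V}
    (d : G.Walk w w) : Prop :=
  ∃ (a b : V) (P P' : G.Walk a b), a ≠ b ∧ P.IsPath ∧ P'.IsPath ∧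
    P.length = G.dist a b ∧ P'.length = G.dist a b ∧ 2 * G.dist a b ≤ r ∧
    (∀ x, x ∈ P.support → x ∈ P'.support → x = a ∨ x = b) ∧
    d.edges.toFinset = P.edges.toFinset ∪ P'.edges.toFinset

/-- Cycles of type (b): the edge set of the cycle consists of an edge `xy` of `G` together
with two internally disjoint shortest paths from a common vertex `v` to `x` and to `y`,
both of the same length `ℓ` with `2ℓ + 1 ≤ r`. -/
def IsTypeBCycle {V : Type*} [DecidableEq V] (G : SimpleGraph V) (r : ℕ) {w : V}
    (d : G.Walk w w) : Prop :=
  ∃ (v x y : V) (P : G.Walk v x) (P' : G.Walk v y), G.Adj x y ∧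
    P.IsPath ∧ P'.IsPath ∧ P.length = G.dist v x ∧ P'.length = G.dist v y ∧
    P.length = P'.length ∧ 2 * P.length + 1 ≤ r ∧
    (∀ z, z ∈ P.support → z ∈ P'.support → z = v) ∧
    d.edges.toFinset = insert s(x, y) (P.edges.toFinset ∪ P'.edges.toFinset)

/-!
Work with edge multiplicities mod 2 (`edgeParity`) rather than edge indicators: they add under
concatenation of walks and agree with `walkChar` on cycles. By strong induction on length, every
closed walk of length at most `r` has its parity vector in the span. A closed walk that is not a
cycle is an edge traversed back and forth or splits into two shorter closed walks. A cycle of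
length `n` through `u` is cut at the vertex `z` at position `⌊n/2⌋`. If `dist u z < ⌊n/2⌋`, a
geodesic from `u` to `z` splits the cycle, mod 2, into two shorter closed walks. Otherwise both
halves are geodesics: for even `n` the cycle is of type (a); for odd `n` the same test at the
neighbour `y` of `z` on the longer half either splits the cycle again or shows it is of type (b).
-/

namespace SimpleGraph

variable {V : Type*} {G : SimpleGraph V} {u v w x y z : V}

namespace Walk

lemma exists_eq_append_of_le_length (p : G.Walk u v) {k : ℕ} (hk : k ≤ p.length) :
    ∃ (z : V) (A : G.Walk u z) (B : G.Walk z v), p = A.append B ∧ A.length = k :=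
  ⟨_, p.take k, p.drop k, (p.append_take_drop_eq k).symm, by simpa using hk⟩

lemma IsCycle.eq_or_eq_of_mem_support_append {A : G.Walk u z} {B : G.Walk z u}
    (hW : (A.append B).IsCycle) (hxA : x ∈ A.support) (hxB : x ∈ B.support) :
    x = u ∨ x = z := by
  have hnd := hW.support_nodup
  rw [tail_support_append, List.nodup_append'] at hnd
  rw [← cons_tail_support, List.mem_cons] at hxA hxB
  rcases hxA with rfl | hxA
  · exact Or.inl rfl
  rcases hxB with rfl | hxB
  · exact Or.inr rfl
  exact (hnd.2.2 hxA hxB).elim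

variable [DecidableEq V]

def edgeParity (p : G.Walk u v) : Sym2 V → ZMod 2 :=
  fun e => (p.edges.count e : ZMod 2)

@[simp]
lemma edgeParity_nil : edgeParity (nil : G.Walk u u) = 0 := by
  funext e; simp [edgeParity]

@[simp]
lemma edgeParity_append (p : G.Walk u v) (q : G.Walk v w) :
    edgeParity (p.append q) = edgeParity p + edgeParity q := by
  funext e; simp [edgeParity]

@[simp]
lemma edgeParity_reverse (p : G.Walk u v) : edgeParity p.reverse = edgeParity p := by
  funext e; simp [edgeParity]

lemma edgeParity_cons (h : G.Adj u v) (p : G.Walk v w) :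
    edgeParity (cons h p) = edgeParity h.toWalk + edgeParity p := by
  rw [← edgeParity_append]; rfl

lemma edgeParity_add_self (p : G.Walk u v) : edgeParity p + edgeParity p = 0 := by
  funext e; exact CharTwo.add_self_eq_zero (edgeParity p e)

lemma edgeParity_cons_toWalk (h : G.Adj u v) (h' : G.Adj v u) :
    edgeParity (cons h h'.toWalk) = 0 := by
  have : h'.toWalk = h.toWalk.reverse := rfl
  rw [edgeParity_cons, this, edgeParity_reverse, edgeParity_add_self]

lemma IsTrail.edgeParity_eq_walkChar {c : G.Walk u u} (hc : c.IsTrail) :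
    edgeParity c = walkChar c := by
  funext e
  by_cases he : e ∈ c.edges
  · simp [edgeParity, walkChar, he, List.count_eq_one_of_mem hc.edges_nodup he]
  · simp [edgeParity, walkChar, he, List.count_eq_zero_of_not_mem he]

lemma exists_eq_append_append_of_not_isPath (p : G.Walk u v) (hp : ¬p.IsPath) :
    ∃ (w : V) (q₁ : G.Walk u w) (c : G.Walk w w) (q₂ : G.Walk w v),
      0 < c.length ∧ p = q₁.append (c.append q₂) := by
  induction p with
  | nil => exact absurd IsPath.nil hp
  | @cons u x v h p ih =>
    by_cases hp' : p.IsPath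
    · have hu : u ∈ p.support := by simpa [cons_isPath_iff, hp'] using hp
      exact ⟨u, nil, cons h (p.takeUntil u hu), p.dropUntil u hu, by simp,
        by simp [p.take_spec hu]⟩
    · obtain ⟨w, q₁, c, q₂, hc, rfl⟩ := ih hp'
      exact ⟨w, cons h q₁, c, q₂, hc, rfl⟩

lemma edgeParity_mem_of_forall_isCycle (S : Submodule (ZMod 2) (Sym2 V → ZMod 2)) {n : ℕ}
    (hS : ∀ (u : V) (W : G.Walk u u), W.IsCycle → W.length ≤ n →
      (∀ (w : V) (W' : G.Walk w w), W'.length < W.length → edgeParity W' ∈ S) →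
      edgeParity W ∈ S)
    (W : G.Walk u u) (hW : W.length ≤ n) : edgeParity W ∈ S := by
  induction hm : W.length using Nat.strong_induction_on generalizing u W with
  | _ m ih =>
    have ih' (w : V) (W' : G.Walk w w) (hW' : W'.length < W.length) : edgeParity W' ∈ S :=
      ih _ (hm ▸ hW') W' (by omega) rfl
    cases W with
    | nil => simp
    | @cons _ x _ h p =>
      by_cases hp : p.IsPath
      · by_cases he : s(u, x) ∈ p.edges
        · rw [hp.eq_adj_toWalk_of_mem_edges (Sym2.eq_swap ▸ he), edgeParity_cons_toWalk]
          exact zero_mem _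
        · exact hS _ _ ((cons_isCycle_iff p h).2 ⟨hp, he⟩) hW ih'
      · obtain ⟨w, q₁, c, q₂, hc, rfl⟩ := p.exists_eq_append_append_of_not_isPath hp
        have hsum : edgeParity (cons h (q₁.append (c.append q₂))) =
            edgeParity c + edgeParity (cons h (q₁.append q₂)) := by
          rw [edgeParity_cons h, edgeParity_cons h (q₁.append q₂)]
          simp only [edgeParity_append]; abel
        rw [hsum]
        exact add_mem (ih' _ c (by simp; omega)) (ih' _ _ (by simp; omega))

lemma edgeParity_append_mem_of_dist_lt (S : Submodule (ZMod 2) (Sym2 V → ZMod 2))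
    {A : G.Walk u z} {B : G.Walk z u}
    (ih : ∀ (w : V) (W : G.Walk w w), W.length < (A.append B).length → edgeParity W ∈ S)
    (hA : G.dist u z < A.length) (hB : G.dist u z < B.length) :
    edgeParity (A.append B) ∈ S := by
  obtain ⟨P, hP⟩ := A.reachable.exists_walk_length_eq_dist
  have hsum : edgeParity (A.append B) =
      edgeParity (A.append P.reverse) + edgeParity (P.append B) := by
    simp only [edgeParity_append, edgeParity_reverse]
    rw [add_assoc, ← add_assoc (edgeParity P), edgeParity_add_self, zero_add]
  rw [hsum]
  exact add_mem (ih _ _ (by simp; omega)) (ih _ _ (by simp; omega))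

lemma IsCycle.isTypeACycle {r : ℕ} {A : G.Walk u z} {B : G.Walk z u}
    (hW : (A.append B).IsCycle) (hA : A.length = G.dist u z) (hB : B.length = G.dist u z)
    (hpos : 0 < G.dist u z) (hr : 2 * G.dist u z ≤ r) : IsTypeACycle G r (A.append B) := by
  have huz : u ≠ z := by rintro rfl; simp at hpos
  refine ⟨u, z, A, B.reverse, huz, hW.isPath_of_append_left (not_nil_iff_lt_length.2 (by omega)),
    (hW.isPath_of_append_right (not_nil_iff_lt_length.2 (by omega))).reverse, hA,
    by simpa using hB, hr, ?_, ?_⟩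
  · intro x hxA hxB
    exact hW.eq_or_eq_of_mem_support_append hxA (by simpa using hxB)
  · simp [edges_append, List.toFinset_append]

lemma IsCycle.isTypeBCycle {r : ℕ} {A : G.Walk u x} (h : G.Adj x y) {B : G.Walk y u}
    (hW : (A.append (cons h B)).IsCycle) (hA : A.length = G.dist u x)
    (hB : B.length = G.dist u y) (hAB : A.length = B.length) (hr : 2 * A.length + 1 ≤ r) :
    IsTypeBCycle G r (A.append (cons h B)) := by
  have h3 := hW.three_le_length
  simp only [length_append, length_cons] at h3
  have hhB : (cons h B).IsPath := hW.isPath_of_append_right (not_nil_iff_lt_length.2 (by omega))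
  refine ⟨u, x, y, A, B.reverse, h, hW.isPath_of_append_left (by simp),
    ((cons_isPath_iff h B).1 hhB).1.reverse, hA, by simpa [dist_comm] using hB,
    by simpa using hAB, hr, ?_, ?_⟩
  · intro t htA htB
    have htB' : t ∈ B.support := by simpa using htB
    refine (hW.eq_or_eq_of_mem_support_append htA (by simp [htB'])).resolve_right ?_
    rintro rfl
    exact ((cons_isPath_iff h B).1 hhB).2 htB'
  · simp [edges_append, List.toFinset_append, Finset.union_insert]

end Walk

variable [DecidableEq V]

variable (G) in
def specialCycleSpan (r : ℕ) : Submodule (ZMod 2) (Sym2 V → ZMod 2) :=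
  Submodule.span (ZMod 2)
    {f | ∃ (w : V) (d : G.Walk w w), d.IsCycle ∧ f = walkChar d ∧
      (IsTypeACycle G r d ∨ IsTypeBCycle G r d)}

open Walk

lemma Walk.IsCycle.edgeParity_mem_specialCycleSpan_of_type {r : ℕ} {d : G.Walk u u}
    (hd : d.IsCycle) (htype : IsTypeACycle G r d ∨ IsTypeBCycle G r d) :
    edgeParity d ∈ G.specialCycleSpan r :=
  Submodule.subset_span ⟨u, d, hd, hd.isTrail.edgeParity_eq_walkChar, htype⟩

lemma Walk.IsCycle.edgeParity_mem_specialCycleSpan {r : ℕ} {W : G.Walk u u} (hW : W.IsCycle)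
    (hr : W.length ≤ r)
    (ih : ∀ (w : V) (W' : G.Walk w w), W'.length < W.length →
      edgeParity W' ∈ G.specialCycleSpan r) :
    edgeParity W ∈ G.specialCycleSpan r := by
  obtain ⟨z, A, B, rfl, hA⟩ := W.exists_eq_append_of_le_length (Nat.div_le_self _ 2)
  have h3 := hW.three_le_length
  rw [length_append] at hA hr h3
  have hzA : G.dist u z ≤ A.length := dist_le A
  by_cases hz : G.dist u z < A.length
  · exact edgeParity_append_mem_of_dist_lt _ ih hz (by omega)
  obtain hB | hB : B.length = A.length ∨ B.length = A.length + 1 := by omega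
  · exact hW.edgeParity_mem_specialCycleSpan_of_type
      (Or.inl (hW.isTypeACycle (by omega) (by omega) (by omega) (by omega)))
  cases B with
  | nil => simp at hB
  | @cons _ y _ h B =>
    simp only [length_cons, add_left_inj] at hB hr h3
    have hyB : G.dist u y ≤ B.length := dist_comm (G := G) ▸ dist_le B
    by_cases hy : G.dist u y < B.length
    · have hsplit : A.append (cons h B) = (A.append h.toWalk).append B := by
        rw [← append_assoc]; rfl
      rw [hsplit] at ih ⊢
      exact edgeParity_append_mem_of_dist_lt _ ih (by simp; omega) hy
    · exact hW.edgeParity_mem_specialCycleSpan_of_type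
        (Or.inr (hW.isTypeBCycle h (by omega) (by omega) hB.symm (by omega)))

end SimpleGraph

theorem cycle_in_span_of_special_cycles_general
    {V : Type*} [DecidableEq V] (r : ℕ) (G : SimpleGraph V)
    (u : V) (c : G.Walk u u) (hc : c.IsCycle) (hlen : c.length ≤ r) :
    walkChar c ∈ Submodule.span (ZMod 2)
      {f : Sym2 V → ZMod 2 | ∃ (w : V) (d : G.Walk w w), d.IsCycle ∧ f = walkChar d ∧
        (IsTypeACycle G r d ∨ IsTypeBCycle G r d)} :=
  hc.isTrail.edgeParity_eq_walkChar ▸ c.edgeParity_mem_of_forall_isCycle _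
    (fun _ _ hW hWr ih ↦ hW.edgeParity_mem_specialCycleSpan hWr ih) hlen

theorem cycle_in_span_of_special_cycles
    {V : Type*} [Fintype V] [DecidableEq V] (r : ℕ) (G : SimpleGraph V)
    (u : V) (c : G.Walk u u) (hc : c.IsCycle) (hlen : c.length ≤ r) :
    walkChar c ∈ Submodule.span (ZMod 2)
      {f : Sym2 V → ZMod 2 | ∃ (w : V) (d : G.Walk w w), d.IsCycle ∧ f = walkChar d ∧
        (IsTypeACycle G r d ∨ IsTypeBCycle G r d)} :=
  cycle_in_span_of_special_cycles_general r G u c hc hlen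
end

section
/- Let G be a finite simple 2-connected graph (G has at least 3 vertices and G − v is connected for every vertex v). Then for every vertex v of G and every nonempty proper subset X of the set of edges of G incident with v, there is a cycle of G whose edge set contains exactly one edge of X. -/
/-! Pick edges `va ∈ X` and `vb ∉ X`. As `G - v` is connected, some `a`–`b` path avoids `v`; closing it
through `v` gives a cycle whose only edges at `v` are `va` and `vb`, so it meets `X` in `va` alone. -/

namespace SimpleGraph

variable {V : Type*} {G : SimpleGraph V}

lemma Subgraph.Preconnected.exists_isPath_support_subset {H : G.Subgraph} (hH : H.Preconnected)
    {a b : V} (ha : a ∈ H.verts) (hb : b ∈ H.verts) :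
    ∃ p : G.Walk a b, p.IsPath ∧ ∀ x ∈ p.support, x ∈ H.verts := by
  obtain ⟨w, hw⟩ := (hH ⟨a, ha⟩ ⟨b, hb⟩).exists_isPath
  have hsupp : ∀ x ∈ (w.map H.hom).support, x ∈ H.verts := by
    simp only [Walk.support_map, List.mem_map]
    rintro _ ⟨x, -, rfl⟩
    exact x.prop
  exact ⟨w.map H.hom, hw.map Subtype.val_injective, hsupp⟩

lemma exists_isPath_not_mem_support_of_preconnected_deleteVerts {v a b : V}
    (h : ((⊤ : G.Subgraph).deleteVerts {v}).Preconnected) (ha : a ≠ v) (hb : b ≠ v) :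
    ∃ p : G.Walk a b, p.IsPath ∧ v ∉ p.support := by
  obtain ⟨p, hp, hsupp⟩ := h.exists_isPath_support_subset (a := a) (b := b) (by simpa) (by simpa)
  exact ⟨p, hp, fun hv => by simpa using hsupp v hv⟩

namespace Walk

variable {v a b : V}

lemma IsPath.isCycle_cons_concat {p : G.Walk a b} (hp : p.IsPath) (hv : v ∉ p.support)
    (ha : G.Adj v a) (hb : G.Adj b v) (hab : a ≠ b) : (cons ha (p.concat hb)).IsCycle := by
  refine (cons_isCycle_iff _ ha).mpr ⟨hp.concat hv hb, ?_⟩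
  rw [edges_concat, List.concat_eq_append, List.mem_append, List.mem_singleton, not_or]
  refine ⟨fun he => hv (p.fst_mem_support_of_mem_edges he), fun he => ?_⟩
  rcases Sym2.eq_iff.mp he with ⟨rfl, -⟩ | ⟨-, rfl⟩
  · exact hb.ne rfl
  · exact hab rfl

lemma eq_or_eq_of_mem_edges_cons_concat {p : G.Walk a b} (hv : v ∉ p.support)
    (ha : G.Adj v a) (hb : G.Adj b v) {e : Sym2 V} (he : e ∈ (cons ha (p.concat hb)).edges)
    (hve : v ∈ e) : e = s(v, a) ∨ e = s(b, v) := by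
  rw [edges_cons, edges_concat, List.concat_eq_append, List.mem_cons, List.mem_append,
    List.mem_singleton] at he
  rcases he with he | he | he
  · exact .inl he
  · exact absurd (mem_support_of_mem_edges he hve) hv
  · exact .inr he

end Walk

lemma exists_isCycle_of_preconnected_deleteVerts {v a b : V}
    (h : ((⊤ : G.Subgraph).deleteVerts {v}).Preconnected) (ha : G.Adj v a) (hb : G.Adj v b)
    (hab : a ≠ b) :
    ∃ c : G.Walk v v, c.IsCycle ∧ s(v, a) ∈ c.edges ∧
      ∀ e ∈ c.edges, v ∈ e → e = s(v, a) ∨ e = s(v, b) := by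
  obtain ⟨p, hp, hv⟩ := exists_isPath_not_mem_support_of_preconnected_deleteVerts h ha.ne' hb.ne'
  refine ⟨.cons ha (p.concat hb.symm), hp.isCycle_cons_concat hv ha hb.symm hab, by simp,
    fun e he hve => ?_⟩
  simpa [Sym2.eq_swap] using Walk.eq_or_eq_of_mem_edges_cons_concat hv ha hb.symm he hve

end SimpleGraph

open SimpleGraph

theorem exists_cycle_meeting_exactly_once_general
    {V : Type*} [DecidableEq V] (G : SimpleGraph V)
    (h2 : ∀ v : V, ((⊤ : G.Subgraph).deleteVerts {v}).Connected) :
    ∀ (v : V) (X : Finset (Sym2 V)), ↑X ⊆ G.incidenceSet v → X.Nonempty →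
      ↑X ≠ G.incidenceSet v →
      ∃ (u : V) (c : G.Walk u u), c.IsCycle ∧ (X ∩ c.edges.toFinset).card = 1 := by
  intro v X hXsub ⟨_, heX⟩ hXne
  obtain ⟨_, hfI, hfX⟩ := Set.exists_of_ssubset (hXsub.ssubset_of_ne hXne)
  obtain ⟨a, rfl⟩ := Sym2.mem_iff_exists.mp (hXsub heX).2
  obtain ⟨b, rfl⟩ := Sym2.mem_iff_exists.mp hfI.2
  have hab : a ≠ b := by rintro rfl; exact hfX heX
  obtain ⟨c, hc, hac, hcv⟩ :=
    exists_isCycle_of_preconnected_deleteVerts (h2 v).preconnected (hXsub heX).1 hfI.1 hab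
  refine ⟨v, c, hc, Finset.card_eq_one.mpr ⟨s(v, a), Finset.eq_singleton_iff_unique_mem.mpr
    ⟨by simpa [heX] using hac, fun e he => ?_⟩⟩⟩
  rw [Finset.mem_inter, List.mem_toFinset] at he
  exact (hcv e he.2 (hXsub he.1).2).resolve_right (by rintro rfl; exact hfX he.1)

theorem exists_cycle_meeting_exactly_once
    {V : Type*} [Fintype V] [DecidableEq V] (G : SimpleGraph V)
    (hcard : 3 ≤ Fintype.card V)
    (h2 : ∀ v : V, ((⊤ : G.Subgraph).deleteVerts {v}).Connected) :
    ∀ (v : V) (X : Finset (Sym2 V)), ↑X ⊆ G.incidenceSet v → X.Nonempty →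
      ↑X ≠ G.incidenceSet v →
      ∃ (u : V) (c : G.Walk u u), c.IsCycle ∧ (X ∩ c.edges.toFinset).card = 1 :=
  exists_cycle_meeting_exactly_once_general G h2
end
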